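/- Let n ≥ 1 and let λ = (λ_1,…,λ_n) ∈ ℂⁿ satisfy λ_1 + ⋯ + λ_n = 0, and let V_0, …, V_n be the Bessel-equation coefficients attached to (n, λ). Then for every ρ ∈ ℂ one has ∑_{j=0}^n [ρ]_j · V_j = ∏_{l=1}^n (ρ + n·λ_l), where [ρ]_j = ρ(ρ−1)⋯(ρ−j+1) is the falling factorial with [ρ]_0 = 1. In other words, the indicial polynomial of the Bessel equation of index λ is ∏_{l=1}^n (ρ + nλ_l). -/
import Mathlib

/-- The shifted double sequence `besselA' (j+1) (m+1) = A(j, m)`, where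
`A(-1,0) = 1`, `A(-1,m) = 0` for `m ≥ 1`, `A(j,-1) = 0` for `j ≥ 0`, and
`A(j,m) = j·A(j,m-1) + A(j-1,m)` for `j, m ≥ 0`. -/
def besselA' : ℕ → ℕ → ℤ
  | 0, 0 => 0
  | 0, 1 => 1
  | 0, _ + 2 => 0
  | _ + 1, 0 => 0
  | j + 1, m + 1 => (j : ℤ) * besselA' (j + 1) m + besselA' j (m + 1)
termination_by j m => (j, m)

/-- `besselA j m = A(j, m)` for `j, m ≥ 0`. -/
def besselA (j m : ℕ) : ℤ := besselA' (j + 1) (m + 1)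

/-- The elementary symmetric polynomial of degree `m` in `λ_1, …, λ_N`. -/
noncomputable def esymm {N : ℕ} (lam : Fin N → ℂ) (m : ℕ) : ℂ :=
  ∑ t ∈ Finset.powersetCard m (Finset.univ : Finset (Fin N)), ∏ l ∈ t, lam l

/-- The Bessel-equation coefficients `V_j` attached to `(n, λ)`:
`V_j = ∑_{m=0}^{n-j} A(j, n-j-m) · nᵐ · e_m(λ)`. -/
noncomputable def besselV (n : ℕ) (lam : Fin n → ℂ) (j : ℕ) : ℂ :=
  ∑ m ∈ Finset.range (n - j + 1), (besselA j (n - j - m) : ℂ) * (n : ℂ) ^ m * esymm lam m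

lemma besselA'_succ_succ (j m : ℕ) :
    besselA' (j+1) (m+1) = (j : ℤ) * besselA' (j+1) m + besselA' j (m+1) := by
  rw [besselA']

lemma besselA'_succ_zero (j : ℕ) : besselA' (j+1) 0 = 0 := by
  rw [besselA']

lemma besselA_rec (j m : ℕ) :
    besselA (j+1) m = ((j:ℤ)+1) * besselA' (j+2) m + besselA j m := by
  unfold besselA
  rw [besselA'_succ_succ (j+1) m]
  push_cast
  ring

lemma besselA_zero_right (j : ℕ) : besselA j 0 = 1 := by
  induction j with
  | zero => simp [besselA, besselA'_succ_succ]; rw [besselA']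
  | succ j ih => rw [besselA_rec, besselA'_succ_zero]; simpa using ih

lemma besselA_zero_left (m : ℕ) : besselA 0 (m+1) = 0 := by
  unfold besselA
  rw [besselA'_succ_succ]
  norm_num
  rw [besselA']

/-- `A(j, k-j)` are the Stirling numbers of the second kind `S(k, j)`, so the
falling-factorial expansion of `ρ^k` holds. -/
lemma besselA_key (ρ : ℂ) (k : ℕ) :
    ∑ j ∈ Finset.range (k+1), (besselA j (k-j) : ℂ) * ∏ κ ∈ Finset.range j, (ρ - κ) = ρ ^ k := by
  induction k with
  | zero => simp [besselA_zero_right]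
  | succ k ih =>
    have expand : ρ ^ (k+1)
        = (∑ j ∈ Finset.range (k+1),
            (besselA j (k-j) : ℂ) * ∏ κ ∈ Finset.range (j+1), (ρ - κ))
        + ∑ j ∈ Finset.range (k+1),
            (j:ℂ) * (besselA j (k-j) : ℂ) * ∏ κ ∈ Finset.range j, (ρ - κ) := by
      calc ρ ^ (k+1) = ρ * ρ ^ k := by ring
        _ = ∑ j ∈ Finset.range (k+1),
              ρ * ((besselA j (k-j) : ℂ) * ∏ κ ∈ Finset.range j, (ρ - κ)) := by
            rw [← ih, Finset.mul_sum]
        _ = ∑ j ∈ Finset.range (k+1),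
              ((besselA j (k-j) : ℂ) * (∏ κ ∈ Finset.range (j+1), (ρ - κ))
                + (j:ℂ) * (besselA j (k-j) : ℂ) * ∏ κ ∈ Finset.range j, (ρ - κ)) := by
            refine Finset.sum_congr rfl fun j _ => ?_
            rw [Finset.prod_range_succ]
            ring
        _ = _ := Finset.sum_add_distrib
    have h1 : ∑ j ∈ Finset.range (k+2), (besselA j (k+1-j) : ℂ) * ∏ κ ∈ Finset.range j, (ρ - κ)
        = ∑ i ∈ Finset.range (k+1),
            (besselA (i+1) (k-i) : ℂ) * ∏ κ ∈ Finset.range (i+1), (ρ - κ) := by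
      rw [Finset.sum_range_succ']
      simp [besselA_zero_left]
    rw [h1, expand]
    have h2 : ∀ i ∈ Finset.range (k+1),
        (besselA (i+1) (k-i) : ℂ) * ∏ κ ∈ Finset.range (i+1), (ρ - κ)
        = (besselA i (k-i) : ℂ) * (∏ κ ∈ Finset.range (i+1), (ρ - κ))
          + ((i:ℂ)+1) * (besselA' (i+2) (k-i) : ℂ) * ∏ κ ∈ Finset.range (i+1), (ρ - κ) := by
      intro i _
      rw [besselA_rec]
      push_cast
      ring
    rw [Finset.sum_congr rfl h2, Finset.sum_add_distrib]
    congr 1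
    rw [Finset.sum_range_succ, Finset.sum_range_succ']
    simp only [Nat.sub_self, besselA'_succ_zero, Nat.cast_zero, zero_mul, mul_zero, add_zero,
      Int.cast_zero, zero_add]
    refine Finset.sum_congr rfl fun i hi => ?_
    rw [Finset.mem_range] at hi
    have hk : k - i = (k - (i+1)) + 1 := by omega
    rw [hk]
    push_cast
    rfl

/-- The indicial polynomial of the Bessel equation of index `λ` is
`∏_{l=1}^n (ρ + n·λ_l)`, where `[ρ]_j` is the falling factorial. -/
theorem stmt_3 (n : ℕ) (hn : 1 ≤ n) (lam : Fin n → ℂ)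
    (hsum : ∑ l, lam l = 0) (ρ : ℂ) :
    ∑ j ∈ Finset.range (n + 1), (∏ κ ∈ Finset.range j, (ρ - κ)) * besselV n lam j =
      ∏ l, (ρ + n * lam l) := by
  classical
  have hswap :
      ∑ j ∈ Finset.range (n+1), (∏ κ ∈ Finset.range j, (ρ - κ)) * besselV n lam j
        = ∑ m ∈ Finset.range (n+1), (n:ℂ)^m * esymm lam m * ρ^(n-m) := by
    calc
      ∑ j ∈ Finset.range (n+1), (∏ κ ∈ Finset.range j, (ρ - κ)) * besselV n lam j
        = ∑ j ∈ Finset.range (n+1), ∑ m ∈ Finset.range (n-j+1),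
            (besselA j (n-j-m) : ℂ) * (n:ℂ)^m * esymm lam m * ∏ κ ∈ Finset.range j, (ρ - κ) := by
          refine Finset.sum_congr rfl fun j _ => ?_
          rw [besselV, Finset.mul_sum]
          exact Finset.sum_congr rfl fun m _ => by ring
      _ = ∑ m ∈ Finset.range (n+1), ∑ j ∈ Finset.range (n-m+1),
            (besselA j (n-j-m) : ℂ) * (n:ℂ)^m * esymm lam m * ∏ κ ∈ Finset.range j, (ρ - κ) :=
          Finset.sum_comm' (by intro j m; simp only [Finset.mem_range]; omega)
      _ = ∑ m ∈ Finset.range (n+1), (n:ℂ)^m * esymm lam m * ρ^(n-m) := by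
          refine Finset.sum_congr rfl fun m _ => ?_
          rw [← besselA_key ρ (n-m), Finset.mul_sum]
          refine Finset.sum_congr rfl fun j _ => ?_
          have hnm : n - j - m = n - m - j := by omega
          rw [hnm]
          ring
  have hprod : ∏ l, (ρ + (n:ℂ) * lam l)
      = ∑ m ∈ Finset.range (n+1), (n:ℂ)^m * esymm lam m * ρ^(n-m) := by
    calc ∏ l, (ρ + (n:ℂ) * lam l)
        = ∏ l, ((n:ℂ) * lam l + ρ) := Finset.prod_congr rfl fun l _ => add_comm _ _
      _ = ∑ t ∈ (Finset.univ : Finset (Fin n)).powerset,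
            (∏ l ∈ t, (n:ℂ) * lam l) * ∏ _l ∈ Finset.univ \ t, ρ :=
          Finset.prod_add _ _ _
      _ = ∑ m ∈ Finset.range (n+1), ∑ t ∈ Finset.powersetCard m (Finset.univ : Finset (Fin n)),
            (∏ l ∈ t, (n:ℂ) * lam l) * ∏ _l ∈ Finset.univ \ t, ρ := by
          rw [Finset.sum_powerset]
          simp
      _ = ∑ m ∈ Finset.range (n+1), (n:ℂ)^m * esymm lam m * ρ^(n-m) := by
          refine Finset.sum_congr rfl fun m _ => ?_
          rw [esymm, Finset.mul_sum, Finset.sum_mul]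
          refine Finset.sum_congr rfl fun t ht => ?_
          have hcard : t.card = m := (Finset.mem_powersetCard.1 ht).2
          have h2 : ∏ l ∈ t, (n:ℂ) * lam l = (n:ℂ)^m * ∏ l ∈ t, lam l := by
            rw [Finset.prod_mul_distrib, Finset.prod_const, hcard]
          have h3 : ∏ _l ∈ (Finset.univ : Finset (Fin n)) \ t, ρ = ρ^(n-m) := by
            rw [Finset.prod_const, Finset.card_sdiff_of_subset (Finset.subset_univ t), hcard,
              Finset.card_univ, Fintype.card_fin]
          rw [h2, h3]
  rw [hswap, hprod]
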